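/- The θ-derivative of the stationary density lies in the kernel of the linearized operator: L(∂θq)(θ, ω) = 0 for all θ ∈ ℝ and ω ∈ {−ω₀, ω₀}. -/

import Mathlib

/-!
The profile `S` solves `∂θ S = (−x sin θ + 2ω) S + (1 − e^{4πω})`, so `q` has constant flux:
`½ ∂θ q − (−Kr sin θ + ω) q = κ(ω)`. The fixed-point equation `r = Ψ_μ(2Kr)` fixes the cosine
moments of `q`, and the symmetry `q(−θ, −ω) = q(θ, ω)` makes its sine moments cancel between
`±ω₀`; hence `⟨J∗q⟩_μ = −Kr sin θ`, and integrating by parts `⟨J∗∂θq⟩_μ = −Kr cos θ`.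
The drift part of `L(∂θ q)` is then `∂θ²(q · (⟨J∗q⟩_μ + ω)) = ∂θ²(½ ∂θ q − κ)`, which cancels
the diffusion part `½ ∂θ³ q`.
-/

noncomputable section

open MeasureTheory

/-- `G u ω x = x·cos u + 2ωu`. -/
def G (u ω x : ℝ) : ℝ := x * Real.cos u + 2 * ω * u

/-- The unnormalized stationary profile `S(θ, ω, x)`. -/
def S (θ ω x : ℝ) : ℝ :=
  Real.exp (G θ ω x) *
    ((1 - Real.exp (4 * Real.pi * ω)) * (∫ u in (0:ℝ)..θ, Real.exp (-(G u ω x))) +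
      Real.exp (4 * Real.pi * ω) * (∫ u in (0:ℝ)..(2 * Real.pi), Real.exp (-(G u ω x))))

/-- The normalization constant `Z(ω, x)`. -/
def Z (ω x : ℝ) : ℝ := ∫ θ in (0:ℝ)..(2 * Real.pi), S θ ω x

/-- `Ψ_μ` for the binary disorder law `μ = (1/2)(δ_{-ω₀} + δ_{ω₀})`. -/
def psiMu (ω₀ x : ℝ) : ℝ :=
  (1 / 2) * ((∫ θ in (0:ℝ)..(2 * Real.pi), Real.cos θ * S θ (-ω₀) x) / Z (-ω₀) x +
    (∫ θ in (0:ℝ)..(2 * Real.pi), Real.cos θ * S θ ω₀ x) / Z ω₀ x)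

/-- The stationary density `q(θ, ω) = S(θ, ω, 2Kr)/Z(ω, 2Kr)`. -/
def q (K r θ ω : ℝ) : ℝ := S θ ω (2 * K * r) / Z ω (2 * K * r)

/-- `κ(ω) = (1 − exp(4πω))/(2 Z(ω, 2Kr))`. -/
def kap (K r ω : ℝ) : ℝ := (1 - Real.exp (4 * Real.pi * ω)) / (2 * Z ω (2 * K * r))

/-- The averaged convolution `⟨J∗h⟩_μ(θ)` for binary disorder. -/
def Jconv (K ω₀ : ℝ) (h : ℝ → ℝ → ℝ) (θ : ℝ) : ℝ :=
  -(K / 2) * ((∫ φ in (0:ℝ)..(2 * Real.pi), Real.sin φ * h (θ - φ) (-ω₀)) +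
    (∫ φ in (0:ℝ)..(2 * Real.pi), Real.sin φ * h (θ - φ) ω₀))

/-- The linearized evolution operator `L` around the stationary density `q`. -/
def Lop (K ω₀ r : ℝ) (h : ℝ → ℝ → ℝ) (θ ω : ℝ) : ℝ :=
  (1 / 2) * deriv (deriv (fun u => h u ω)) θ -
    deriv (fun u => h u ω * (Jconv K ω₀ (q K r) u + ω) + q K r u ω * Jconv K ω₀ h u) θ

open Real intervalIntegral

section TrigonometricMoments

def cosMoment (f : ℝ → ℝ) : ℝ := ∫ t in (0:ℝ)..2 * π, cos t * f t

def sinMoment (f : ℝ → ℝ) : ℝ := ∫ t in (0:ℝ)..2 * π, sin t * f t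

variable {f : ℝ → ℝ}

theorem Function.Periodic.deriv {c : ℝ} (hf : Function.Periodic f c) :
    Function.Periodic (deriv f) c := fun t => by
  rw [← deriv_comp_add_const, hf.funext]

theorem integral_sin_mul_comp_sub (hf : Continuous f) (hper : Function.Periodic f (2 * π))
    (θ : ℝ) :
    ∫ φ in (0:ℝ)..2 * π, sin φ * f (θ - φ) = sin θ * cosMoment f - cos θ * sinMoment f := by
  have hshift : Function.Periodic (fun u => sin (θ - u) * f u) (2 * π) := fun u => by
    simp only [sub_add_eq_sub_sub, sin_sub_two_pi, hper u]
  calc ∫ φ in (0:ℝ)..2 * π, sin φ * f (θ - φ)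
      = ∫ u in θ - 2 * π..θ - 2 * π + 2 * π, sin (θ - u) * f u := by
        rw [sub_add_cancel]
        simpa using integral_comp_sub_left (fun u => sin (θ - u) * f u) θ (a := 0) (b := 2 * π)
    _ = ∫ u in (0:ℝ)..2 * π, (sin θ * (cos u * f u) - cos θ * (sin u * f u)) := by
        rw [hshift.intervalIntegral_add_eq _ 0, zero_add]
        exact integral_congr fun u _ => by simp only [sin_sub]; ring
    _ = sin θ * cosMoment f - cos θ * sinMoment f := by
        rw [intervalIntegral.integral_sub, intervalIntegral.integral_const_mul,
          intervalIntegral.integral_const_mul, cosMoment, sinMoment] <;>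
          exact (continuous_const.mul (by fun_prop)).intervalIntegrable _ _

theorem cosMoment_deriv (hf : Differentiable ℝ f) (hf' : Continuous (deriv f))
    (hper : f (2 * π) = f 0) : cosMoment (deriv f) = sinMoment f := by
  rw [cosMoment, integral_mul_deriv_eq_deriv_mul (fun t _ => hasDerivAt_cos t)
    (fun t _ => (hf t).hasDerivAt) (continuous_sin.neg.intervalIntegrable _ _)
    (hf'.intervalIntegrable _ _), hper, cos_two_pi, cos_zero]
  simp [sinMoment, intervalIntegral.integral_neg]

theorem sinMoment_deriv (hf : Differentiable ℝ f) (hf' : Continuous (deriv f)) :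
    sinMoment (deriv f) = -cosMoment f := by
  rw [sinMoment, integral_mul_deriv_eq_deriv_mul (fun t _ => hasDerivAt_sin t)
    (fun t _ => (hf t).hasDerivAt) (continuous_cos.intervalIntegrable _ _)
    (hf'.intervalIntegrable _ _), sin_two_pi, sin_zero]
  simp [cosMoment]

theorem sinMoment_comp_neg (hper : Function.Periodic f (2 * π)) :
    sinMoment (fun t => f (-t)) = -sinMoment f := by
  have hsf : Function.Periodic (fun t => sin t * f t) (2 * π) := sin_periodic.mul hper
  have hshift := hsf.intervalIntegral_add_eq (-(2 * π)) 0
  rw [neg_add_cancel, zero_add] at hshift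
  calc sinMoment (fun t => f (-t)) = -∫ t in (0:ℝ)..2 * π, sin (-t) * f (-t) := by
        simp only [sinMoment, sin_neg, neg_mul, intervalIntegral.integral_neg, neg_neg]
    _ = -sinMoment f := by
        rw [integral_comp_neg (fun t => sin t * f t), neg_zero, hshift, sinMoment]

theorem Jconv_eq_moments (K ω₀ : ℝ) {h : ℝ → ℝ → ℝ} (hc : ∀ ω, Continuous (h · ω))
    (hper : ∀ ω, Function.Periodic (h · ω) (2 * π)) (θ : ℝ) :
    Jconv K ω₀ h θ = -(K / 2) * (sin θ * (cosMoment (h · (-ω₀)) + cosMoment (h · ω₀)) -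
      cos θ * (sinMoment (h · (-ω₀)) + sinMoment (h · ω₀))) := by
  rw [Jconv, integral_sin_mul_comp_sub (hc _) (hper _), integral_sin_mul_comp_sub (hc _) (hper _)]
  ring

end TrigonometricMoments

section StationaryProfile

def primitiveExpNegG (ω x θ : ℝ) : ℝ := ∫ u in (0:ℝ)..θ, exp (-G u ω x)

variable (ω x : ℝ)

theorem continuous_exp_neg_G : Continuous fun u => exp (-G u ω x) := by
  unfold G; fun_prop

theorem G_add_two_pi (u : ℝ) : G (u + 2 * π) ω x = G u ω x + 4 * π * ω := by
  rw [G, G, cos_add_two_pi]; ring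

theorem G_neg_freq (u : ℝ) : G u (-ω) x = G (-u) ω x := by
  rw [G, G, cos_neg]; ring

theorem S_eq_primitiveExpNegG (θ : ℝ) : S θ ω x = exp (G θ ω x) *
    ((1 - exp (4 * π * ω)) * primitiveExpNegG ω x θ +
      exp (4 * π * ω) * primitiveExpNegG ω x (2 * π)) := rfl

theorem primitiveExpNegG_zero : primitiveExpNegG ω x 0 = 0 := integral_same

theorem primitiveExpNegG_add_two_pi (θ : ℝ) : primitiveExpNegG ω x (θ + 2 * π) =
    primitiveExpNegG ω x (2 * π) + exp (-(4 * π * ω)) * primitiveExpNegG ω x θ := by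
  have hint : ∀ a b, IntervalIntegrable (fun u => exp (-G u ω x)) volume a b :=
    (continuous_exp_neg_G ω x).intervalIntegrable
  calc primitiveExpNegG ω x (θ + 2 * π)
      = primitiveExpNegG ω x (2 * π) + ∫ u in 2 * π..θ + 2 * π, exp (-G u ω x) :=
        (integral_add_adjacent_intervals (hint _ _) (hint _ _)).symm
    _ = primitiveExpNegG ω x (2 * π) + ∫ u in (0:ℝ)..θ, exp (-G (u + 2 * π) ω x) := by
        rw [integral_comp_add_right (fun u => exp (-G u ω x)), zero_add]
    _ = primitiveExpNegG ω x (2 * π) + exp (-(4 * π * ω)) * primitiveExpNegG ω x θ := by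
        congr 1
        rw [primitiveExpNegG, ← intervalIntegral.integral_const_mul]
        refine integral_congr fun u _ => ?_
        rw [G_add_two_pi, ← exp_add]
        ring_nf

theorem primitiveExpNegG_neg (θ : ℝ) : primitiveExpNegG (-ω) x (-θ) = -primitiveExpNegG ω x θ := by
  simp only [primitiveExpNegG, G_neg_freq]
  rw [integral_comp_neg (fun u => exp (-G u ω x)), neg_neg, neg_zero, integral_symm]

theorem primitiveExpNegG_neg_two_pi : primitiveExpNegG (-ω) x (2 * π) =
    exp (4 * π * ω) * primitiveExpNegG ω x (2 * π) := by
  have hshift := primitiveExpNegG_add_two_pi ω x (-(2 * π))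
  rw [neg_add_cancel, primitiveExpNegG_zero] at hshift
  have hneg := primitiveExpNegG_neg ω x (-(2 * π))
  rw [neg_neg] at hneg
  rw [hneg]
  have he : exp (4 * π * ω) * exp (-(4 * π * ω)) = 1 := by rw [← exp_add]; simp
  linear_combination exp (4 * π * ω) * hshift + primitiveExpNegG ω x (-(2 * π)) * he

theorem hasDerivAt_S (θ : ℝ) : HasDerivAt (fun t => S t ω x)
    ((-x * sin θ + 2 * ω) * S θ ω x + (1 - exp (4 * π * ω))) θ := by
  have hG : HasDerivAt (fun t => G t ω x) (-x * sin θ + 2 * ω) θ :=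
    (((hasDerivAt_cos θ).const_mul x).add ((hasDerivAt_id θ).const_mul (2 * ω))).congr_deriv
      (by ring)
  have hP : HasDerivAt (primitiveExpNegG ω x) (exp (-G θ ω x)) θ :=
    integral_hasDerivAt_right
      ((continuous_exp_neg_G ω x).intervalIntegrable _ _)
      ((continuous_exp_neg_G ω x).stronglyMeasurableAtFilter _ _)
      (continuous_exp_neg_G ω x).continuousAt
  refine (hG.exp.mul ((hP.const_mul (1 - exp (4 * π * ω))).add_const
    (exp (4 * π * ω) * primitiveExpNegG ω x (2 * π)))).congr_deriv ?_
  rw [S_eq_primitiveExpNegG, exp_neg]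
  field_simp

theorem continuous_S : Continuous fun θ => S θ ω x :=
  continuous_iff_continuousAt.2 fun θ => (hasDerivAt_S ω x θ).continuousAt

theorem S_periodic : Function.Periodic (fun θ => S θ ω x) (2 * π) := fun θ => by
  simp only [S_eq_primitiveExpNegG, G_add_two_pi, primitiveExpNegG_add_two_pi, exp_add, exp_neg]
  field_simp
  ring

theorem S_neg_neg (θ : ℝ) : S (-θ) (-ω) x = exp (-(4 * π * ω)) * S θ ω x := by
  simp only [S_eq_primitiveExpNegG, G_neg_freq, neg_neg, primitiveExpNegG_neg,
    primitiveExpNegG_neg_two_pi, mul_neg, exp_neg]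
  field_simp
  ring

theorem Z_neg : Z (-ω) x = exp (-(4 * π * ω)) * Z ω x := by
  have hshift := (S_periodic ω x).intervalIntegral_add_eq (-(2 * π)) 0
  rw [neg_add_cancel, zero_add] at hshift
  calc Z (-ω) x = ∫ θ in (0:ℝ)..2 * π, exp (-(4 * π * ω)) * S (-θ) ω x := by
        refine integral_congr fun θ _ => ?_
        simpa using S_neg_neg ω x (-θ)
    _ = exp (-(4 * π * ω)) * Z ω x := by
        rw [intervalIntegral.integral_const_mul,
          integral_comp_neg (fun θ => S θ ω x), neg_zero, hshift, Z]

end StationaryProfile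

section StationaryDensity

variable (K r : ℝ)

theorem q_periodic (ω : ℝ) : Function.Periodic (q K r · ω) (2 * π) := fun θ => by
  simp only [q, S_periodic ω (2 * K * r) θ]

theorem continuous_q (ω : ℝ) : Continuous (q K r · ω) :=
  (continuous_S ω (2 * K * r)).div_const _

theorem q_neg_neg (θ ω : ℝ) : q K r (-θ) (-ω) = q K r θ ω := by
  rw [q, q, S_neg_neg, Z_neg, mul_div_mul_left _ _ (exp_ne_zero _)]

theorem hasDerivAt_q (θ ω : ℝ) : HasDerivAt (q K r · ω)
    (2 * ((-(K * r) * sin θ + ω) * q K r θ ω) + 2 * kap K r ω) θ :=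
  ((hasDerivAt_S ω (2 * K * r) θ).div_const _).congr_deriv (by rw [q, kap]; ring)

theorem differentiable_q (ω : ℝ) : Differentiable ℝ (q K r · ω) :=
  fun θ => (hasDerivAt_q K r θ ω).differentiableAt

theorem continuous_deriv_q (ω : ℝ) : Continuous (deriv (q K r · ω)) := by
  rw [funext fun θ => (hasDerivAt_q K r θ ω).deriv]
  have := continuous_q K r ω
  fun_prop

theorem sinMoment_q_neg (ω : ℝ) : sinMoment (q K r · (-ω)) = -sinMoment (q K r · ω) := by
  simpa only [← q_neg_neg K r _ ω, neg_neg] using sinMoment_comp_neg (q_periodic K r ω)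

theorem cosMoment_q (ω : ℝ) :
    cosMoment (q K r · ω) = (∫ θ in (0:ℝ)..2 * π, cos θ * S θ ω (2 * K * r)) / Z ω (2 * K * r) := by
  simp only [cosMoment, q, mul_div_assoc', intervalIntegral.integral_div]

theorem cosMoment_deriv_q (ω : ℝ) : cosMoment (deriv (q K r · ω)) = sinMoment (q K r · ω) :=
  cosMoment_deriv (differentiable_q K r ω) (continuous_deriv_q K r ω) (q_periodic K r ω).eq

theorem sinMoment_deriv_q (ω : ℝ) : sinMoment (deriv (q K r · ω)) = -cosMoment (q K r · ω) :=
  sinMoment_deriv (differentiable_q K r ω) (continuous_deriv_q K r ω)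

variable {K r} {ω₀ : ℝ} (hfix : r = psiMu ω₀ (2 * K * r))
include hfix

theorem cosMoment_q_add_cosMoment_q :
    cosMoment (q K r · (-ω₀)) + cosMoment (q K r · ω₀) = 2 * r :=
  calc _ = 2 * psiMu ω₀ (2 * K * r) := by rw [psiMu, cosMoment_q, cosMoment_q]; ring
    _ = 2 * r := by rw [← hfix]

theorem Jconv_q (θ : ℝ) : Jconv K ω₀ (q K r) θ = -(K * r) * sin θ := by
  rw [Jconv_eq_moments K ω₀ (continuous_q K r) (q_periodic K r), cosMoment_q_add_cosMoment_q hfix,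
    sinMoment_q_neg]
  ring

theorem Jconv_deriv_q (θ : ℝ) :
    Jconv K ω₀ (fun u ω => deriv (q K r · ω) u) θ = -(K * r) * cos θ := by
  rw [Jconv_eq_moments K ω₀ (continuous_deriv_q K r) fun ω => (q_periodic K r ω).deriv]
  simp only [cosMoment_deriv_q, sinMoment_deriv_q, sinMoment_q_neg]
  rw [← neg_add, cosMoment_q_add_cosMoment_q hfix]
  ring

end StationaryDensity

theorem deriv_flux_eq_half_deriv_deriv_deriv {p V V' : ℝ → ℝ} {c : ℝ} (hp : Differentiable ℝ p)
    (hV : ∀ t, HasDerivAt V (V' t) t) (hflux : ∀ t, deriv p t = 2 * (V t * p t) + c) (θ : ℝ) :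
    deriv (fun u => deriv p u * V u + p u * V' u) θ = 1 / 2 * deriv (deriv (deriv p)) θ := by
  have hpV : p * V = fun t => 1 / 2 * deriv p t - c / 2 := by
    funext t
    rw [Pi.mul_apply, hflux]
    ring
  have hprod : (fun u => deriv p u * V u + p u * V' u) = fun u => 1 / 2 * deriv (deriv p) u := by
    funext u
    rw [← ((hp u).hasDerivAt.mul (hV u)).deriv, hpV, deriv_sub_const, deriv_const_mul_field]
  rw [hprod, deriv_const_mul_field]

theorem stmt5_general (K ω₀ r : ℝ) (hfix : r = psiMu ω₀ (2 * K * r)) :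
    ∀ θ : ℝ, ∀ ω ∈ ({-ω₀, ω₀} : Set ℝ),
      Lop K ω₀ r (fun u ω' => deriv (fun u' => q K r u' ω') u) θ ω = 0 := by
  intro θ ω _
  have hV : ∀ t, HasDerivAt (fun u => Jconv K ω₀ (q K r) u + ω)
      (Jconv K ω₀ (fun u ω' => deriv (q K r · ω') u) t) t := fun t => by
    simp only [Jconv_q hfix, Jconv_deriv_q hfix]
    exact ((hasDerivAt_sin t).const_mul _).add_const ω
  have hflux : ∀ t, deriv (q K r · ω) t =
      2 * ((Jconv K ω₀ (q K r) t + ω) * q K r t ω) + 2 * kap K r ω := fun t => by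
    rw [Jconv_q hfix, (hasDerivAt_q K r t ω).deriv]
  exact sub_eq_zero.2
    (deriv_flux_eq_half_deriv_deriv_deriv (differentiable_q K r ω) hV hflux θ).symm

/-- The `θ`-derivative of the stationary density lies in the kernel of `L`. -/
theorem stmt5 (K ω₀ r : ℝ) (hK : 0 < K) (hω₀ : 0 < ω₀) (hr : 0 < r)
    (hfix : r = psiMu ω₀ (2 * K * r)) :
    ∀ θ : ℝ, ∀ ω ∈ ({-ω₀, ω₀} : Set ℝ),
      Lop K ω₀ r (fun u ω' => deriv (fun u' => q K r u' ω') u) θ ω = 0 :=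
  stmt5_general K ω₀ r hfix
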